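/- Let $\mathcal{D}$ be a bounded sequence of integers $(d_k)_{k\ge 1}$ with every $d_k \ge 2$, and let $(i,j)$ be a pair of real numbers with $0 < i,j < 1$ and $i+j=1$. Then the Hausdorff dimension of $\mathrm{Bad} \cap \mathrm{Bad}_{\mathcal{D}}(i,j)$ equals $1$, where $\mathrm{Bad}$ is the classical set of badly approximable numbers; in particular $\mathrm{Bad} \cap \mathrm{Bad}_{\mathcal{D}}(i,j) \neq \emptyset$. -/

import Mathlib

/-- `Dprod d n = d 0 * d 1 * ... * d (n-1)`, i.e. the product of the first `n`
terms of the sequence `d` (so `Dprod d 0 = 1`). -/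
def Dprod (d : ℕ → ℕ) (n : ℕ) : ℕ := ∏ k ∈ Finset.range n, d k

/-- The `𝒟`-adic pseudo absolute value `|q|_𝒟 = inf {1 / D_n : q ∈ D_n ℤ}`. -/
noncomputable def pseudoAbs (d : ℕ → ℕ) (q : ℕ) : ℝ :=
  sInf {x : ℝ | ∃ n : ℕ, Dprod d n ∣ q ∧ x = 1 / (Dprod d n : ℝ)}

/-- Distance from a real number to its nearest integer. -/
noncomputable def distNearestInt (x : ℝ) : ℝ := |x - round x|

/-- The set of mixed `(i,j)`-badly approximable numbers `Bad_𝒟(i,j)`. -/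
def BadD (d : ℕ → ℕ) (i j : ℝ) : Set ℝ :=
  {x : ℝ | ∃ c : ℝ, 0 < c ∧ ∀ q : ℕ, 0 < q →
    max (pseudoAbs d q ^ (1 / i)) (distNearestInt ((q : ℝ) * x) ^ (1 / j)) > c / (q : ℝ)}

/-- The classical set of badly approximable numbers. -/
def Bad : Set ℝ :=
  {x : ℝ | ∃ c : ℝ, 0 < c ∧ ∀ q : ℕ, 0 < q → distNearestInt ((q : ℝ) * x) > c / (q : ℝ)}

/-! At level `n` of a Cantor construction in base `R = 2^k` with `c = R^-(3 + 1/j)`, the only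
rationals `p/q` that matter are those with `c R^(n+1) ≤ q² < c R^(n+2)` (for `Bad`) and those with
`c^j R^(n+1) ≤ q^(1+j) < c^j R^(n+2)` whose `q` is divisible by some `D_m` with
`q ≤ c D_m^(1/i)` (for `Bad_𝒟(i,j)`; for all other `q` the term `|q|_𝒟^(1/i)` already exceeds
`c/q`). Within each family distinct rationals are more than `2 R^-n` apart (in the second family
since the smaller `D_m` divides both denominators), so their balls of radius `c/q²`, resp.
`c^j/q^(1+j)`, block at most `8` of the `R` subintervals of the current interval. Keeping
`R/2 - 8` free subintervals of even index at every level yields a Cantor set in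
`Bad ∩ Bad_𝒟(i,j)`; reading the choices as base-`(R/2 - 8)` digits maps it onto `[0, 1]` by a
Hölder map of exponent `log (R/2 - 8) / log R`, so its dimension is at least this exponent, which
tends to `1` as `k → ∞`.
-/

open Set Filter Topology
open scoped ENNReal NNReal

lemma dimH_range_le_div_of_abs_sub_le {X : Type*} [Nonempty X] {f g : X → ℝ} {C r : ℝ≥0}
    (hr : 0 < r) (h : ∀ x y, |g x - g y| ≤ C * |f x - f y| ^ (r : ℝ)) :
    dimH (range g) ≤ dimH (range f) / r := by
  have hg : ∀ x, g (Function.invFun f (f x)) = g x := fun x => by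
    have := h (Function.invFun f (f x)) x
    rw [Function.invFun_eq (f := f) ⟨x, rfl⟩, sub_self, abs_zero, Real.zero_rpow (by positivity),
      mul_zero] at this
    exact sub_eq_zero.1 (abs_nonpos_iff.1 this)
  have hHolder : HolderOnWith C r (g ∘ Function.invFun f) (range f) := by
    rintro _ ⟨x, rfl⟩ _ ⟨y, rfl⟩
    simp only [Function.comp_apply, hg, edist_dist, Real.dist_eq]
    rw [ENNReal.ofReal_rpow_of_nonneg (abs_nonneg _) r.coe_nonneg, ← ENNReal.ofReal_coe_nnreal,
      ← ENNReal.ofReal_mul C.coe_nonneg]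
    exact ENNReal.ofReal_le_ofReal (h x y)
  have himage : g ∘ Function.invFun f '' range f = range g := by
    rw [← range_comp]
    exact congrArg range (funext hg)
  simpa only [himage] using hHolder.dimH_image_le hr

def slot (a ℓ : ℝ) (t : ℕ) : Set ℝ := Icc (a + t * ℓ) (a + (t + 1) * ℓ)

namespace AdaptiveCantor

variable {R S : ℕ} (pick : ℕ → ℝ → Fin S → Fin R)

noncomputable def base (σ : ℕ → Fin S) : ℕ → ℝ
  | 0 => 0
  | n + 1 => base σ n + (pick n (base σ n) (σ n) : ℕ) * ((R : ℝ) ^ (n + 1))⁻¹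

noncomputable def digits (σ : ℕ → Fin S) (n : ℕ) : Fin R := pick n (base pick σ n) (σ n)

noncomputable def point (σ : ℕ → Fin S) : ℝ := Real.ofDigits (digits pick σ)

lemma base_eq_sum (σ : ℕ → Fin S) (n : ℕ) :
    base pick σ n = ∑ k ∈ Finset.range n, Real.ofDigitsTerm (digits pick σ) k := by
  induction n with
  | zero => rfl
  | succ n ih => rw [Finset.sum_range_succ, ← ih]; rfl

lemma point_mem_slot (σ : ℕ → Fin S) (n : ℕ) :
    point pick σ ∈ slot (base pick σ n) ((R : ℝ) ^ (n + 1))⁻¹ (digits pick σ n) := by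
  have htail₀ := Real.ofDigits_nonneg fun k => digits pick σ (k + (n + 1))
  have htail₁ := Real.ofDigits_le_one fun k => digits pick σ (k + (n + 1))
  have hℓ : (0 : ℝ) ≤ ((R : ℝ) ^ (n + 1))⁻¹ := by positivity
  rw [point, Real.ofDigits_eq_sum_add_ofDigits _ (n + 1), Finset.sum_range_succ, ← base_eq_sum]
  constructor <;> simp only [Real.ofDigitsTerm] <;> nlinarith

lemma base_congr {σ τ : ℕ → Fin S} {n : ℕ} (h : ∀ k < n, σ k = τ k) :
    base pick σ n = base pick τ n := by
  induction n with
  | zero => rfl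
  | succ n ih =>
    have hbase := ih fun k hk => h k (by omega)
    simp only [base, hbase, h n n.lt_succ_self]

variable {pick}

section Separated

variable (hgap : ∀ n a ⦃s s' : Fin S⦄, s < s' → (pick n a s : ℕ) + 2 ≤ pick n a s')
include hgap

lemma inv_pow_le_point_sub {σ τ : ℕ → Fin S} {n : ℕ} (h : ∀ k < n, σ k = τ k)
    (hlt : σ n < τ n) : ((R : ℝ) ^ (n + 1))⁻¹ ≤ point pick τ - point pick σ := by
  have hσ := (point_mem_slot pick σ n).2
  have hτ := (point_mem_slot pick τ n).1
  have hdigit : (digits pick σ n : ℝ) + 2 ≤ digits pick τ n := by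
    unfold digits
    rw [base_congr pick h]
    exact_mod_cast hgap _ _ hlt
  rw [base_congr pick h] at hσ
  have hℓ : (0 : ℝ) ≤ ((R : ℝ) ^ (n + 1))⁻¹ := by positivity
  nlinarith

lemma inv_pow_le_abs_point_sub {σ τ : ℕ → Fin S} (hne : σ ≠ τ) :
    ((R : ℝ) ^ (PiNat.firstDiff σ τ + 1))⁻¹ ≤ |point pick σ - point pick τ| := by
  have hagree : ∀ k < PiNat.firstDiff σ τ, σ k = τ k := fun k hk =>
    PiNat.apply_eq_of_lt_firstDiff hk
  rcases (PiNat.apply_firstDiff_ne hne).lt_or_gt with hlt | hlt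
  · rw [abs_sub_comm]
    exact (inv_pow_le_point_sub hgap hagree hlt).trans (le_abs_self _)
  · exact (inv_pow_le_point_sub hgap (fun k hk => (hagree k hk).symm) hlt).trans (le_abs_self _)

lemma abs_ofDigits_sub_le (hR : 1 < R) (σ τ : ℕ → Fin S) :
    |Real.ofDigits σ - Real.ofDigits τ| ≤
      S * |point pick σ - point pick τ| ^ Real.logb R S := by
  rcases eq_or_ne σ τ with rfl | hne
  · simp only [sub_self, abs_zero]
    positivity
  set n := PiNat.firstDiff σ τ
  have hS : (0 : ℝ) < S := by
    have := (σ 0).pos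
    positivity
  have hscale : (((R : ℝ) ^ (n + 1))⁻¹) ^ Real.logb R S = ((S : ℝ) ^ (n + 1))⁻¹ := by
    rw [Real.inv_rpow (by positivity), ← Real.rpow_natCast, ← Real.rpow_mul (by positivity),
      mul_comm, Real.rpow_mul (by positivity),
      Real.rpow_logb (by positivity) (by exact_mod_cast hR.ne') hS, Real.rpow_natCast]
  calc |Real.ofDigits σ - Real.ofDigits τ| ≤ ((S : ℝ) ^ n)⁻¹ :=
        Real.abs_ofDigits_sub_ofDigits_le fun k hk => PiNat.apply_eq_of_lt_firstDiff hk
    _ = S * (((R : ℝ) ^ (n + 1))⁻¹) ^ Real.logb R S := by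
        rw [hscale, pow_succ', mul_inv, mul_inv_cancel_left₀ hS.ne']
    _ ≤ S * |point pick σ - point pick τ| ^ Real.logb R S := by
        gcongr
        · exact Real.logb_nonneg (by exact_mod_cast hR) (by exact_mod_cast (σ 0).pos)
        · exact inv_pow_le_abs_point_sub hgap hne

theorem ofReal_logb_le_dimH_range_point (hS : 1 < S) :
    ENNReal.ofReal (Real.logb R S) ≤ dimH (range (point pick)) := by
  have : Nonempty (Fin S) := ⟨⟨0, by omega⟩⟩
  have hR : 1 < R := by
    have := hgap 0 0 (show (⟨0, by omega⟩ : Fin S) < ⟨1, hS⟩ from Fin.mk_lt_mk.2 one_pos)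
    have := (pick 0 0 ⟨1, hS⟩).isLt
    omega
  have hα : 0 < Real.logb R S := Real.logb_pos (by exact_mod_cast hR) (by exact_mod_cast hS)
  set α : ℝ≥0 := ⟨Real.logb R S, hα.le⟩
  have hholder := dimH_range_le_div_of_abs_sub_le (C := ⟨S, S.cast_nonneg⟩) (r := α) hα
    (abs_ofDigits_sub_le hgap hR)
  have hunit : dimH (Icc (0 : ℝ) 1) = 1 := by
    rw [Real.dimH_of_nonempty_interior (by simp), Module.finrank_self, Nat.cast_one]
  have hrange : (1 : ℝ≥0∞) ≤ dimH (range (Real.ofDigits (b := S))) := by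
    rw [← hunit]
    exact dimH_mono fun x hx => by simpa using Real.ofDigits_SurjOn (by omega) hx
  have := (ENNReal.le_div_iff_mul_le (Or.inl (by exact_mod_cast (show 0 < α from hα).ne'))
    (Or.inl ENNReal.coe_ne_top)).1 (hrange.trans hholder)
  rw [one_mul] at this
  rwa [ENNReal.ofReal_eq_coe_nnreal hα.le]

end Separated

end AdaptiveCantor

theorem exists_ofReal_logb_le_dimH_of_forall_exists_slots {R S : ℕ} (hS : 1 < S)
    (Good : ℕ → ℝ → ℕ → Prop)
    (hgood : ∀ n a, ∃ f : Fin S → Fin R,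
      (∀ s, Good n a (f s)) ∧ ∀ ⦃s s' : Fin S⦄, s < s' → (f s : ℕ) + 2 ≤ f s') :
    ∃ E : Set ℝ, ENNReal.ofReal (Real.logb R S) ≤ dimH E ∧
      ∀ x ∈ E, ∀ n, ∃ a t, Good n a t ∧ x ∈ slot a ((R : ℝ) ^ (n + 1))⁻¹ t := by
  choose pick hpick hgap using hgood
  refine ⟨range (AdaptiveCantor.point pick),
    AdaptiveCantor.ofReal_logb_le_dimH_range_point hgap hS, ?_⟩
  rintro _ ⟨σ, rfl⟩ n
  exact ⟨_, _, hpick n _ (σ n), AdaptiveCantor.point_mem_slot pick σ n⟩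

def IsFreeSlot (Z : Set (ℝ × ℝ)) (a ℓ : ℝ) (t : ℕ) : Prop :=
  ∀ b ∈ Z, Disjoint (slot a ℓ t) (Metric.closedBall b.1 b.2)

lemma IsFreeSlot.lt_abs_sub {Z : Set (ℝ × ℝ)} {a ℓ x : ℝ} {t : ℕ} (h : IsFreeSlot Z a ℓ t)
    (hx : x ∈ slot a ℓ t) {b : ℝ × ℝ} (hb : b ∈ Z) : b.2 < |x - b.1| := by
  simpa [Real.dist_eq] using Set.disjoint_left.1 (h b hb) hx

lemma IsFreeSlot.union {Z₁ Z₂ : Set (ℝ × ℝ)} {a ℓ : ℝ} {t : ℕ} (h₁ : IsFreeSlot Z₁ a ℓ t)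
    (h₂ : IsFreeSlot Z₂ a ℓ t) : IsFreeSlot (Z₁ ∪ Z₂) a ℓ t :=
  fun b hb => hb.elim (h₁ b) (h₂ b)

lemma mem_Icc_of_not_disjoint_slot {a ℓ z ρ : ℝ} {t : ℕ} (hρ : ρ ≤ ℓ)
    (h : ¬Disjoint (slot a ℓ t) (Metric.closedBall z ρ)) :
    z ∈ Icc (a + (t - 1) * ℓ) (a + (t + 2) * ℓ) := by
  obtain ⟨x, ⟨hx₁, hx₂⟩, hxz⟩ := Set.not_disjoint_iff.1 h
  rw [Metric.mem_closedBall, Real.dist_eq, abs_le] at hxz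
  constructor <;> nlinarith [hxz.1, hxz.2]

open Classical in
lemma card_filter_not_isFreeSlot_le_four {Z : Set (ℝ × ℝ)} {a ℓ : ℝ} {R : ℕ} (hℓ : 0 < ℓ)
    (hρ : ∀ b ∈ Z, b.2 ≤ ℓ)
    (hsep : ∀ b ∈ Z, ∀ b' ∈ Z, b.1 ≠ b'.1 → (R + 2) * ℓ < |b.1 - b'.1|) :
    ((Finset.range R).filter fun t => ¬IsFreeSlot Z a ℓ t).card ≤ 4 := by
  set B := (Finset.range R).filter fun t => ¬IsFreeSlot Z a ℓ t
  rcases B.eq_empty_or_nonempty with hB | hB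
  · simp [hB]
  have hwindow : ∀ t ∈ B, (t : ℝ) ≤ R - 1 ∧
      ∃ b ∈ Z, b.1 ∈ Icc (a + (t - 1) * ℓ) (a + (t + 2) * ℓ) := by
    intro t ht
    obtain ⟨htR, hfree⟩ := Finset.mem_filter.1 ht
    obtain ⟨b, hb, hbt⟩ : ∃ b ∈ Z, ¬Disjoint (slot a ℓ t) (Metric.closedBall b.1 b.2) := by
      simpa [IsFreeSlot] using hfree
    refine ⟨?_, b, hb, mem_Icc_of_not_disjoint_slot (hρ b hb) hbt⟩
    have : (t : ℝ) + 1 ≤ R := by exact_mod_cast Finset.mem_range.1 htR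
    linarith
  set t₀ := B.min' hB
  have hsub : B ⊆ Finset.Icc t₀ (t₀ + 3) := by
    intro t ht
    obtain ⟨htR, b, hb, hz⟩ := hwindow t ht
    obtain ⟨ht₀R, b₀, hb₀, hz₀⟩ := hwindow t₀ (B.min'_mem hB)
    have hmin : t₀ ≤ t := B.min'_le t ht
    have hclose : |b.1 - b₀.1| ≤ (R + 2) * ℓ := by
      rw [abs_le]
      constructor <;> nlinarith [hz.1, hz.2, hz₀.1, hz₀.2]
    have hcenter : b.1 = b₀.1 := by
      by_contra hne
      exact (hsep b hb b₀ hb₀ hne).not_ge hclose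
    have : (t : ℝ) ≤ t₀ + 3 := by
      rw [hcenter] at hz
      nlinarith [hz.1, hz₀.2]
    exact Finset.mem_Icc.2 ⟨hmin, by exact_mod_cast this⟩
  calc B.card ≤ (Finset.Icc t₀ (t₀ + 3)).card := Finset.card_le_card hsub
    _ = 4 := by rw [Nat.card_Icc]; omega

lemma exists_gapped_fin_forall_not_mem (R m : ℕ) (B : Finset ℕ) (hB : B.card ≤ m) :
    ∃ f : Fin (R / 2 - m) → Fin R,
      (∀ s, (f s : ℕ) ∉ B) ∧ ∀ ⦃s s' : Fin (R / 2 - m)⦄, s < s' → (f s : ℕ) + 2 ≤ f s' := by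
  classical
  set T := (Finset.range (R / 2)).filter fun u => 2 * u ∉ B
  have hcard : R / 2 - m ≤ T.card := by
    have hhit : ((Finset.range (R / 2)).filter fun u => 2 * u ∈ B).card ≤ m :=
      (Finset.card_le_card_of_injOn (2 * ·) (fun u hu => (Finset.mem_filter.1 hu).2)
        fun u _ v _ h => by simpa using h).trans hB
    have hsplit : ((Finset.range (R / 2)).filter fun u => 2 * u ∈ B).card + T.card = R / 2 := by
      rw [Finset.card_filter_add_card_filter_not, Finset.card_range]
    omega
  set g := T.orderEmbOfCardLe hcard
  have hg : ∀ s, g s < R / 2 ∧ 2 * g s ∉ B := fun s => by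
    simpa [T] using T.orderEmbOfCardLe_mem hcard s
  refine ⟨fun s => ⟨2 * g s, by have := (hg s).1; omega⟩, fun s => (hg s).2, fun s s' h => ?_⟩
  have := g.strictMono h
  show 2 * g s + 2 ≤ 2 * g s'
  omega

lemma Dprod_dvd_Dprod (d : ℕ → ℕ) {m n : ℕ} (h : m ≤ n) : Dprod d m ∣ Dprod d n :=
  Finset.prod_dvd_prod_of_subset _ _ _ (Finset.range_subset_range.2 h)

lemma two_pow_le_Dprod {d : ℕ → ℕ} (hd2 : ∀ k, 2 ≤ d k) (n : ℕ) : 2 ^ n ≤ Dprod d n := by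
  simpa [Dprod] using Finset.pow_card_le_prod (Finset.range n) d 2 fun k _ => hd2 k

lemma exists_Dprod_dvd_one_div_le_pseudoAbs {d : ℕ → ℕ} (hd2 : ∀ k, 2 ≤ d k) {q : ℕ}
    (hq : 0 < q) : ∃ N, Dprod d N ∣ q ∧ 1 / (Dprod d N : ℝ) ≤ pseudoAbs d q := by
  classical
  have hbound : ∀ n, Dprod d n ∣ q → n ≤ q := fun n hn =>
    n.lt_two_pow_self.le.trans ((two_pow_le_Dprod hd2 n).trans (Nat.le_of_dvd hq hn))
  set N := Nat.findGreatest (fun n => Dprod d n ∣ q) q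
  have hN : Dprod d N ∣ q :=
    Nat.findGreatest_spec (P := fun n => Dprod d n ∣ q) (Nat.zero_le q) (by simp [Dprod])
  refine ⟨N, hN, le_csInf ⟨1, 0, by simp [Dprod]⟩ ?_⟩
  rintro _ ⟨n, hn, rfl⟩
  have hle : Dprod d n ≤ Dprod d N := Nat.le_of_dvd (Nat.pos_of_dvd_of_pos hN hq)
    (Dprod_dvd_Dprod d (Nat.le_findGreatest (hbound n hn) hn))
  have : (0 : ℝ) < Dprod d n := by exact_mod_cast Nat.pos_of_dvd_of_pos hn hq
  gcongr

lemma div_mul_le_abs_div_sub_div {p p' : ℤ} {q q' D : ℕ} (hq : 0 < q) (hq' : 0 < q')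
    (hDq : D ∣ q) (hDq' : D ∣ q') (hne : (p : ℝ) / q ≠ p' / q') :
    (D : ℝ) / (q * q') ≤ |(p : ℝ) / q - p' / q'| := by
  have hq₀ : (q : ℝ) ≠ 0 := by positivity
  have hq₀' : (q' : ℝ) ≠ 0 := by positivity
  have hdiff : (p : ℝ) / q - p' / q' = ((p * q' - p' * q : ℤ) : ℝ) / (q * q') := by
    push_cast
    field_simp
  have hnum : p * q' - p' * q ≠ 0 := fun h => hne <| by
    rw [div_eq_div_iff hq₀ hq₀']
    exact_mod_cast sub_eq_zero.1 h
  have hdvd : (D : ℤ) ∣ p * q' - p' * q :=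
    dvd_sub ((Int.natCast_dvd_natCast.2 hDq').mul_left p)
      ((Int.natCast_dvd_natCast.2 hDq).mul_left p')
  have hD : (D : ℤ) ≤ |p * q' - p' * q| := Int.le_of_dvd (abs_pos.2 hnum) ((dvd_abs _ _).2 hdvd)
  rw [hdiff, abs_div, abs_of_pos (by positivity : (0 : ℝ) < q * q')]
  gcongr
  exact_mod_cast hD

section Levels

variable {R : ℕ}

/-- The radius `κ / q ^ e` lies in `(R^-(n+2), R^-(n+1)]`. -/
def IsAtLevel (R : ℕ) (κ e : ℝ) (n q : ℕ) : Prop :=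
  κ * R ^ (n + 1) ≤ (q : ℝ) ^ e ∧ (q : ℝ) ^ e < κ * R ^ (n + 2)

def levelBalls (R : ℕ) (κ e : ℝ) (Q : ℕ → Prop) (n : ℕ) : Set (ℝ × ℝ) :=
  {b | ∃ (p : ℤ) (q : ℕ), 0 < q ∧ Q q ∧ IsAtLevel R κ e n q ∧ b = ((p : ℝ) / q, κ / (q : ℝ) ^ e)}

lemma exists_isAtLevel (hR : 1 < R) {κ e : ℝ} (hκ : 0 < κ) (hκR : κ * R ≤ 1) {q : ℕ}
    (hq : 1 ≤ (q : ℝ) ^ e) : ∃ n, IsAtLevel R κ e n q := by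
  have hκR₀ : 0 < κ * R := by positivity
  obtain ⟨n, hn₁, hn₂⟩ := exists_nat_pow_near (x := (q : ℝ) ^ e / (κ * R))
    ((one_le_div hκR₀).2 (hκR.trans hq)) (by exact_mod_cast hR : (1 : ℝ) < R)
  rw [le_div_iff₀ hκR₀] at hn₁
  rw [div_lt_iff₀ hκR₀] at hn₂
  refine ⟨n, le_of_eq_of_le ?_ hn₁, hn₂.trans_eq ?_⟩ <;> ring

lemma rpow_sub_one_mul_lt_of_isAtLevel {κ e : ℝ} (he : 1 ≤ e) {n q q' : ℕ}
    (hq : IsAtLevel R κ e n q) (hq' : IsAtLevel R κ e n q') :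
    (q : ℝ) ^ (e - 1) * q' < κ * R ^ (n + 2) := by
  have hpow : ∀ y : ℝ, 0 ≤ y → y ^ (e - 1) * y = y ^ e := fun y hy => by
    rw [← Real.rpow_add_one' hy (by linarith), sub_add_cancel]
  rcases le_total q q' with h | h
  · calc (q : ℝ) ^ (e - 1) * q' ≤ (q' : ℝ) ^ (e - 1) * q' := by gcongr
      _ < _ := (hpow _ q'.cast_nonneg).symm ▸ hq'.2
  · calc (q : ℝ) ^ (e - 1) * q' ≤ (q : ℝ) ^ (e - 1) * q := by gcongr
      _ < _ := (hpow _ q.cast_nonneg).symm ▸ hq.2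

lemma snd_le_of_mem_levelBalls (hR : 0 < R) {κ e : ℝ} {Q : ℕ → Prop} {n : ℕ} {b : ℝ × ℝ}
    (hb : b ∈ levelBalls R κ e Q n) : b.2 ≤ ((R : ℝ) ^ (n + 1))⁻¹ := by
  obtain ⟨p, q, hq, -, hlevel, rfl⟩ := hb
  have : (0 : ℝ) < (q : ℝ) ^ e := by positivity
  rw [div_le_iff₀ this, inv_mul_eq_div, le_div_iff₀ (by positivity)]
  exact hlevel.1

open Classical in
lemma card_filter_not_isFreeSlot_levelBalls_le_four (hR : 2 ≤ R) {κ e : ℝ} {Q : ℕ → Prop}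
    {n : ℕ} (a : ℝ)
    (hcommon : ∀ q q', 0 < q → 0 < q' → Q q → Q q' → IsAtLevel R κ e n q →
      IsAtLevel R κ e n q' → ∃ D : ℕ, D ∣ q ∧ D ∣ q' ∧ 2 * ((q : ℝ) * q') < D * R ^ n) :
    ((Finset.range R).filter fun t =>
      ¬IsFreeSlot (levelBalls R κ e Q n) a ((R : ℝ) ^ (n + 1))⁻¹ t).card ≤ 4 := by
  have hR₀ : (0 : ℝ) < R := by positivity
  refine card_filter_not_isFreeSlot_le_four (by positivity)
    (fun b hb => snd_le_of_mem_levelBalls (by omega) hb) ?_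
  rintro _ ⟨p, q, hq, hQ, hlevel, rfl⟩ _ ⟨p', q', hq', hQ', hlevel', rfl⟩ hne
  obtain ⟨D, hDq, hDq', hlt⟩ := hcommon q q' hq hq' hQ hQ' hlevel hlevel'
  have hwidth : ((R : ℝ) + 2) * ((R : ℝ) ^ (n + 1))⁻¹ ≤ 2 / R ^ n := by
    have hshrink : ((R : ℝ) + 2) * (R : ℝ)⁻¹ ≤ 2 := by
      have : (2 : ℝ) ≤ R := by exact_mod_cast hR
      rw [← div_eq_mul_inv, div_le_iff₀ hR₀]
      linarith
    calc ((R : ℝ) + 2) * ((R : ℝ) ^ (n + 1))⁻¹ = ((R + 2) * (R : ℝ)⁻¹) * ((R : ℝ) ^ n)⁻¹ := by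
          rw [pow_succ, mul_inv]; ring
      _ ≤ 2 * ((R : ℝ) ^ n)⁻¹ := by gcongr
      _ = 2 / R ^ n := (div_eq_mul_inv _ _).symm
  refine hwidth.trans_lt ((?_ : 2 / (R : ℝ) ^ n < D / (q * q')).trans_le
    (div_mul_le_abs_div_sub_div hq hq' hDq hDq' hne))
  rw [div_lt_div_iff₀ (by positivity) (by positivity)]
  linarith

end Levels

/-- The exponent makes both `2 c R² ≤ 1` and `c^j R ≤ 1` hold. -/
noncomputable def badConst (R : ℕ) (j : ℝ) : ℝ := (R : ℝ) ^ (-(3 + 1 / j))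

section BadConst

variable {R : ℕ} {j : ℝ}

lemma badConst_pos (hR : 0 < R) : 0 < badConst R j :=
  Real.rpow_pos_of_pos (by exact_mod_cast hR) _

lemma badConst_le (hR : 1 ≤ R) (hj : 0 < j) : badConst R j ≤ ((R : ℝ) ^ 3)⁻¹ := by
  have : 0 < 1 / j := by positivity
  rw [badConst, ← Real.rpow_natCast, ← Real.rpow_neg (by positivity)]
  exact Real.rpow_le_rpow_of_exponent_le (by exact_mod_cast hR) (by push_cast; linarith)

lemma badConst_rpow_le (hR : 1 ≤ R) (hj : 0 < j) : badConst R j ^ j ≤ (R : ℝ)⁻¹ := by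
  have hexp : -(3 + 1 / j) * j = -(3 * j) - 1 := by field_simp; ring
  rw [badConst, ← Real.rpow_mul (by positivity), hexp, ← Real.rpow_neg_one]
  exact Real.rpow_le_rpow_of_exponent_le (by exact_mod_cast hR) (by linarith)

lemma badConst_mul_le_one (hR : 1 ≤ R) (hj : 0 < j) : badConst R j * R ≤ 1 := by
  have hR₁ : (1 : ℝ) ≤ R := by exact_mod_cast hR
  calc badConst R j * R ≤ ((R : ℝ) ^ 3)⁻¹ * R := by gcongr; exact badConst_le hR hj
    _ = ((R : ℝ) ^ 2)⁻¹ := by field_simp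
    _ ≤ 1 := inv_le_one_of_one_le₀ (one_le_pow₀ hR₁)

lemma two_mul_badConst_mul_sq_le_one (hR : 2 ≤ R) (hj : 0 < j) :
    2 * badConst R j * (R : ℝ) ^ 2 ≤ 1 := by
  have hR₂ : (2 : ℝ) ≤ R := by exact_mod_cast hR
  calc 2 * badConst R j * (R : ℝ) ^ 2 ≤ 2 * ((R : ℝ) ^ 3)⁻¹ * (R : ℝ) ^ 2 := by
        gcongr; exact badConst_le (by omega) hj
    _ = 2 / (R : ℝ) := by field_simp
    _ ≤ 1 := by rw [div_le_one (by positivity)]; exact hR₂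

lemma badConst_rpow_mul_le_one (hR : 1 ≤ R) (hj : 0 < j) : badConst R j ^ j * R ≤ 1 := by
  have hR₀ : (0 : ℝ) < R := by exact_mod_cast hR
  calc badConst R j ^ j * R ≤ (R : ℝ)⁻¹ * R := by gcongr; exact badConst_rpow_le hR hj
    _ = 1 := inv_mul_cancel₀ hR₀.ne'

end BadConst

/-- The denominators `q` for which `|q|_𝒟 ^ (1 / i) > κ / q` may fail. -/
def IsDangerous (d : ℕ → ℕ) (i κ : ℝ) (q : ℕ) : Prop :=
  ∃ m, Dprod d m ∣ q ∧ (q : ℝ) ≤ κ * (Dprod d m : ℝ) ^ (1 / i)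

noncomputable def dangerBalls (d : ℕ → ℕ) (i j : ℝ) (R n : ℕ) : Set (ℝ × ℝ) :=
  levelBalls R (badConst R j) 2 (fun _ => True) n ∪
    levelBalls R (badConst R j ^ j) (1 + j) (IsDangerous d i (badConst R j)) n

section Spacing

variable {d : ℕ → ℕ} {i j : ℝ} {R n q q' : ℕ}

lemma exists_common_dvd_of_isAtLevel_two (hR : 2 ≤ R) (hj : 0 < j)
    (hq : IsAtLevel R (badConst R j) 2 n q) (hq' : IsAtLevel R (badConst R j) 2 n q') :
    ∃ D : ℕ, D ∣ q ∧ D ∣ q' ∧ 2 * ((q : ℝ) * q') < D * R ^ n := by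
  have hlt := rpow_sub_one_mul_lt_of_isAtLevel one_le_two hq hq'
  rw [show (2 : ℝ) - 1 = 1 by norm_num, Real.rpow_one] at hlt
  refine ⟨1, one_dvd q, one_dvd q', ?_⟩
  calc 2 * ((q : ℝ) * q') < 2 * badConst R j * R ^ 2 * R ^ n := by
        rw [pow_add] at hlt; linarith
    _ ≤ 1 * (R : ℝ) ^ n := by gcongr; exact two_mul_badConst_mul_sq_le_one hR hj
    _ = (1 : ℕ) * (R : ℝ) ^ n := by norm_num

lemma exists_common_dvd_of_isDangerous (hi : 0 < i) (hj : 0 < j) (hij : i + j = 1) (hR : 2 ≤ R)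
    (hq₀ : 0 < q) (hq₀' : 0 < q')
    (hdq : IsDangerous d i (badConst R j) q) (hdq' : IsDangerous d i (badConst R j) q')
    (hq : IsAtLevel R (badConst R j ^ j) (1 + j) n q)
    (hq' : IsAtLevel R (badConst R j ^ j) (1 + j) n q') :
    ∃ D : ℕ, D ∣ q ∧ D ∣ q' ∧ 2 * ((q : ℝ) * q') < D * R ^ n := by
  obtain ⟨m, hm, hqm⟩ := hdq
  obtain ⟨m', hm', hqm'⟩ := hdq'
  wlog hmm : m ≤ m' generalizing q q' m m'
  · obtain ⟨D, hD', hD, hlt⟩ := this hq₀' hq₀ hq' hq m' hm' hqm' m hm hqm (by omega)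
    exact ⟨D, hD, hD', by rwa [mul_comm (q : ℝ)]⟩
  have hc := badConst_pos (j := j) (by omega : 0 < R)
  set c := badConst R j
  refine ⟨Dprod d m, hm, (Dprod_dvd_Dprod d hmm).trans hm', ?_⟩
  have hqi : (q : ℝ) ^ i ≤ c ^ i * Dprod d m := by
    calc (q : ℝ) ^ i ≤ (c * (Dprod d m : ℝ) ^ (1 / i)) ^ i := by gcongr
      _ = c ^ i * Dprod d m := by
          rw [Real.mul_rpow hc.le (by positivity), one_div,
            Real.rpow_inv_rpow (by positivity) hi.ne']
  have hlt := rpow_sub_one_mul_lt_of_isAtLevel (by linarith) hq hq'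
  rw [add_sub_cancel_left] at hlt
  have hsplit : (q : ℝ) * q' = q ^ i * (q ^ j * q') := by
    rw [← mul_assoc, ← Real.rpow_add (by positivity), hij, Real.rpow_one]
  have hcc : c ^ i * c ^ j = c := by rw [← Real.rpow_add hc, hij, Real.rpow_one]
  calc 2 * ((q : ℝ) * q') = 2 * (q ^ i * (q ^ j * q')) := by rw [hsplit]
    _ < 2 * (c ^ i * Dprod d m * (c ^ j * R ^ (n + 2))) := by
        have hD : (0 : ℝ) < Dprod d m := by
          exact_mod_cast Nat.pos_of_dvd_of_pos hm hq₀
        have := mul_lt_mul' hqi hlt (by positivity) (by positivity)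
        linarith
    _ = (2 * (c ^ i * c ^ j) * (R : ℝ) ^ 2) * Dprod d m * R ^ n := by rw [pow_add]; ring
    _ ≤ 1 * Dprod d m * R ^ n := by
        rw [hcc]; gcongr; exact two_mul_badConst_mul_sq_le_one hR hj
    _ = _ := by ring

lemma exists_gapped_isFreeSlot_dangerBalls (hi : 0 < i) (hj : 0 < j) (hij : i + j = 1)
    (hR : 2 ≤ R) (n : ℕ) (a : ℝ) :
    ∃ f : Fin (R / 2 - 8) → Fin R,
      (∀ s, IsFreeSlot (dangerBalls d i j R n) a ((R : ℝ) ^ (n + 1))⁻¹ (f s)) ∧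
        ∀ ⦃s s' : Fin (R / 2 - 8)⦄, s < s' → (f s : ℕ) + 2 ≤ f s' := by
  classical
  have h₁ := card_filter_not_isFreeSlot_levelBalls_le_four hR (κ := badConst R j) (e := 2)
    (Q := fun _ => True) (n := n) a
    fun _ _ _ _ _ _ hq hq' => exists_common_dvd_of_isAtLevel_two hR hj hq hq'
  have h₂ := card_filter_not_isFreeSlot_levelBalls_le_four hR (κ := badConst R j ^ j)
    (e := 1 + j) (Q := IsDangerous d i (badConst R j)) (n := n) a
    fun _ _ hq₀ hq₀' hdq hdq' hq hq' =>
      exists_common_dvd_of_isDangerous hi hj hij hR hq₀ hq₀' hdq hdq' hq hq'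
  obtain ⟨f, hf, hgap⟩ := exists_gapped_fin_forall_not_mem R 8 _
    ((Finset.card_union_le _ _).trans (add_le_add h₁ h₂))
  refine ⟨f, fun s => ?_, hgap⟩
  have := hf s
  simp only [Finset.mem_union, Finset.mem_filter, Finset.mem_range, (f s).isLt, true_and,
    not_or, not_not] at this
  exact this.1.union this.2

end Spacing

lemma distNearestInt_natCast_mul {q : ℕ} (hq : 0 < q) (x : ℝ) :
    distNearestInt (q * x) = q * |x - round ((q : ℝ) * x) / q| := by
  have hq₀ : (0 : ℝ) < q := by exact_mod_cast hq
  rw [distNearestInt, ← abs_of_pos hq₀, ← abs_mul, abs_of_pos hq₀, mul_sub,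
    mul_div_cancel₀ _ hq₀.ne']

lemma lt_abs_sub_div_of_forall_levelBalls {R : ℕ} (hR : 1 < R) {κ e x : ℝ} {Q : ℕ → Prop}
    (hκ : 0 < κ) (hκR : κ * R ≤ 1) (he : 0 ≤ e)
    (hx : ∀ n, ∀ b ∈ levelBalls R κ e Q n, b.2 < |x - b.1|) {q : ℕ} (hq : 0 < q) (hQ : Q q)
    (p : ℤ) : κ / (q : ℝ) ^ e < |x - p / q| := by
  obtain ⟨n, hn⟩ := exists_isAtLevel hR hκ hκR (Real.one_le_rpow (by exact_mod_cast hq) he)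
  exact hx n _ ⟨p, q, hq, hQ, hn, rfl⟩

section Membership

variable {d : ℕ → ℕ} {i j : ℝ} {R : ℕ}

lemma mem_Bad_of_forall_levelBalls (hR : 2 ≤ R) (hj : 0 < j) {x : ℝ}
    (hx : ∀ n, ∀ b ∈ levelBalls R (badConst R j) 2 (fun _ => True) n, b.2 < |x - b.1|) :
    x ∈ Bad := by
  refine ⟨badConst R j, badConst_pos (by omega), fun q hq => ?_⟩
  have hq₀ : (0 : ℝ) < q := by exact_mod_cast hq
  have happrox := lt_abs_sub_div_of_forall_levelBalls (by omega) (badConst_pos (by omega))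
    (badConst_mul_le_one (by omega) hj) zero_le_two hx hq trivial (round ((q : ℝ) * x))
  rw [gt_iff_lt, distNearestInt_natCast_mul hq]
  calc badConst R j / q = q * (badConst R j / (q : ℝ) ^ (2 : ℝ)) := by
        rw [Real.rpow_two]; field_simp
    _ < _ := mul_lt_mul_of_pos_left happrox hq₀

lemma mem_BadD_of_forall_levelBalls (hd2 : ∀ k, 2 ≤ d k) (hi : 0 < i) (hj : 0 < j)
    (hR : 2 ≤ R) {x : ℝ}
    (hx : ∀ n, ∀ b ∈ levelBalls R (badConst R j ^ j) (1 + j) (IsDangerous d i (badConst R j)) n,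
      b.2 < |x - b.1|) :
    x ∈ BadD d i j := by
  have hc : 0 < badConst R j := badConst_pos (by omega)
  refine ⟨badConst R j, hc, fun q hq => ?_⟩
  have hq₀ : (0 : ℝ) < q := by exact_mod_cast hq
  obtain ⟨N, hN, hNq⟩ := exists_Dprod_dvd_one_div_le_pseudoAbs hd2 hq
  have hD : (0 : ℝ) < Dprod d N := by exact_mod_cast Nat.pos_of_dvd_of_pos hN hq
  rw [gt_iff_lt, lt_max_iff]
  by_cases hdanger : (q : ℝ) ≤ badConst R j * (Dprod d N : ℝ) ^ (1 / i)
  · right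
    have happrox := lt_abs_sub_div_of_forall_levelBalls (by omega) (by positivity)
      (badConst_rpow_mul_le_one (by omega) hj) (by positivity) hx hq ⟨N, hN, hdanger⟩
      (round ((q : ℝ) * x))
    have hpow : (badConst R j / q) ^ j < distNearestInt (q * x) := by
      rw [distNearestInt_natCast_mul hq]
      calc (badConst R j / q) ^ j = q * (badConst R j ^ j / (q : ℝ) ^ (1 + j)) := by
            rw [Real.div_rpow hc.le hq₀.le, Real.rpow_add hq₀, Real.rpow_one]
            field_simp
        _ < _ := mul_lt_mul_of_pos_left happrox hq₀
    rw [one_div]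
    exact (Real.lt_rpow_inv_iff_of_pos (by positivity) (abs_nonneg _) hj).2 hpow
  · left
    rw [not_le] at hdanger
    calc badConst R j / q < (1 / (Dprod d N : ℝ)) ^ (1 / i) := by
          rw [Real.div_rpow zero_le_one hD.le, Real.one_rpow,
            div_lt_div_iff₀ hq₀ (by positivity)]
          linarith
      _ ≤ pseudoAbs d q ^ (1 / i) := by gcongr

theorem ofReal_logb_le_dimH_bad_inter_badD (hd2 : ∀ k, 2 ≤ d k) (hi : 0 < i) (hj : 0 < j)
    (hij : i + j = 1) (hR : 20 ≤ R) :
    ENNReal.ofReal (Real.logb R (R / 2 - 8 : ℕ)) ≤ dimH (Bad ∩ BadD d i j) := by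
  obtain ⟨E, hdim, hE⟩ := exists_ofReal_logb_le_dimH_of_forall_exists_slots (by omega) _
    (exists_gapped_isFreeSlot_dangerBalls hi hj hij (by omega : 2 ≤ R))
  refine hdim.trans (dimH_mono fun x hx => ?_)
  have havoid : ∀ n, ∀ b ∈ dangerBalls d i j R n, b.2 < |x - b.1| := fun n b hb => by
    obtain ⟨a, t, hfree, hxt⟩ := hE x hx n
    exact hfree.lt_abs_sub hxt hb
  exact ⟨mem_Bad_of_forall_levelBalls (by omega) hj fun n b hb => havoid n b (Or.inl hb),
    mem_BadD_of_forall_levelBalls hd2 hi hj (by omega) fun n b hb => havoid n b (Or.inr hb)⟩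

end Membership

lemma one_sub_two_div_le_logb {k : ℕ} (hk : 5 ≤ k) :
    1 - 2 / (k : ℝ) ≤ Real.logb (2 ^ k : ℕ) (2 ^ k / 2 - 8 : ℕ) := by
  obtain ⟨m, rfl⟩ : ∃ m, k = m + 2 := ⟨k - 2, by omega⟩
  have hS : 2 ^ m ≤ 2 ^ (m + 2) / 2 - 8 := by
    have : 2 ^ 3 ≤ 2 ^ m := Nat.pow_le_pow_right two_pos (by omega)
    rw [pow_add]
    omega
  have hlog2 : 0 < Real.log 2 := Real.log_pos one_lt_two
  calc 1 - 2 / ((m + 2 : ℕ) : ℝ) = Real.logb (2 ^ (m + 2) : ℕ) (2 ^ m : ℕ) := by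
        rw [Real.logb, Nat.cast_pow, Nat.cast_pow, Real.log_pow, Real.log_pow]
        push_cast
        field_simp
        ring
    _ ≤ _ := Real.logb_le_logb_of_le (by norm_cast; exact Nat.one_lt_two_pow (by omega))
        (by positivity) (by exact_mod_cast hS)

theorem dimH_bad_inter_badD_general (d : ℕ → ℕ) (hd2 : ∀ k, 2 ≤ d k)
    (i j : ℝ) (hi : 0 < i) (hj : 0 < j) (hij : i + j = 1) :
    dimH (Bad ∩ BadD d i j) = 1 ∧ (Bad ∩ BadD d i j).Nonempty := by
  have hlower : ∀ᶠ k : ℕ in atTop, ENNReal.ofReal (1 - 2 / k) ≤ dimH (Bad ∩ BadD d i j) :=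
    eventually_atTop.2 ⟨5, fun k hk =>
      (ENNReal.ofReal_le_ofReal (one_sub_two_div_le_logb hk)).trans
        (ofReal_logb_le_dimH_bad_inter_badD hd2 hi hj hij
          ((Nat.pow_le_pow_right two_pos hk).trans' (by norm_num)))⟩
  have hlim : Tendsto (fun k : ℕ => ENNReal.ofReal (1 - 2 / k)) atTop (𝓝 1) := by
    simpa using ENNReal.tendsto_ofReal ((tendsto_const_div_atTop_nhds_zero_nat 2).const_sub 1)
  have hdim : dimH (Bad ∩ BadD d i j) = 1 :=
    le_antisymm ((dimH_mono (subset_univ _)).trans_eq Real.dimH_univ) (le_of_tendsto hlim hlower)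
  refine ⟨hdim, nonempty_iff_ne_empty.2 fun hempty => ?_⟩
  simp [hempty] at hdim

/-- The set `Bad ∩ Bad_𝒟(i,j)` has full Hausdorff dimension; in particular it is
nonempty. -/
theorem dimH_bad_inter_badD (d : ℕ → ℕ) (hd2 : ∀ k, 2 ≤ d k) (hdbdd : ∃ M, ∀ k, d k ≤ M)
    (i j : ℝ) (hi : 0 < i) (hi' : i < 1) (hj : 0 < j) (hj' : j < 1) (hij : i + j = 1) :
    dimH (Bad ∩ BadD d i j) = 1 ∧ (Bad ∩ BadD d i j).Nonempty :=
  dimH_bad_inter_badD_general d hd2 i j hi hj hij
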